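/- arXiv:2411.08268 — 5 statements merged into one kernel-verified Lean document; each statement's English description precedes it below -/
import Mathlib

section
/- Let k ≥ 2 be an integer and q ≥ 2 an integer. There exists a constant C > 0 (depending only on q and k) such that for all real x ≥ 2, ∑_{n ≤ x} |h(n)| ≤ C·x^{1/k}·(log x)^{π(q)}, where π(q) is the number of primes at most q. -/
open Complex Finset
open scoped Classical

/-- `h(n) = ∑ μ(a)` over pairs `(a,b)` of positive integers with `a^k b = n` and every prime
factor of `b` dividing `q`; the `n`-th Dirichlet coefficient of `P(s)/ζ(ks)`. -/
noncomputable def hcoef (q k n : ℕ) : ℤ :=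
  ∑ a ∈ n.divisors,
    if a ^ k ∣ n ∧ ∀ p : ℕ, p.Prime → p ∣ n / a ^ k → p ∣ q
    then ArithmeticFunction.moebius a else 0

/-!
Since `|μ(a)| ≤ 1`, the sum is at most the number of pairs `(a, b)` with `a^k b ≤ x` and every
prime factor of `b` dividing `q`. There are at most `x^{1/k}` choices of `a`, and `b` is determined
by its exponents at the at most `π(q)` primes dividing `q`, each of which is at most `log₂ x`.
-/

noncomputable def hcoefDivisors (q k n : ℕ) : Finset ℕ :=
  {a ∈ n.divisors | a ^ k ∣ n ∧ ∀ p : ℕ, p.Prime → p ∣ n / a ^ k → p ∣ q}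

noncomputable def friablesUpTo (q N : ℕ) : Finset ℕ :=
  {b ∈ Icc 1 N | ∀ p : ℕ, p.Prime → p ∣ b → p ∣ q}

lemma abs_hcoef_le_card (q k n : ℕ) : |(hcoef q k n : ℝ)| ≤ #(hcoefDivisors q k n) := by
  rw [hcoef, ← sum_filter, card_eq_sum_ones, Nat.cast_sum]
  push_cast
  exact (abs_sum_le_sum_abs _ _).trans <| sum_le_sum fun a _ ↦ mod_cast
    ArithmeticFunction.abs_moebius_le_one

lemma card_sigma_hcoefDivisors_le {k : ℕ} (hk : k ≠ 0) (q N : ℕ) :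
    #((Icc 1 N).sigma (hcoefDivisors q k)) ≤ Nat.nthRoot k N * #(friablesUpTo q N) := by
  refine (card_le_card_of_injOn (t := Icc 1 (Nat.nthRoot k N) ×ˢ friablesUpTo q N)
    (fun z ↦ (z.2, z.1 / z.2 ^ k)) ?_ ?_).trans_eq (by simp)
  · rintro ⟨n, a⟩ hz
    simp only [coe_sigma, Set.mem_sigma_iff, mem_coe, mem_Icc, hcoefDivisors, mem_filter,
      Nat.mem_divisors] at hz
    obtain ⟨⟨hn, hnN⟩, ⟨ha, -⟩, hak, hfriable⟩ := hz
    have ha0 : 0 < a := Nat.pos_of_dvd_of_pos ha hn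
    have hakn : a ^ k ≤ n := Nat.le_of_dvd hn hak
    simp only [coe_product, Set.mem_prod, mem_coe, mem_Icc, friablesUpTo, mem_filter]
    exact ⟨⟨ha0, (Nat.le_nthRoot_iff hk).2 (hakn.trans hnN)⟩,
      ⟨(Nat.one_le_div_iff (pow_pos ha0 k)).2 hakn, (Nat.div_le_self _ _).trans hnN⟩,
      hfriable⟩
  · rintro ⟨n, a⟩ hz ⟨n', a'⟩ hz' heq
    simp only [Prod.mk.injEq] at heq
    obtain ⟨rfl, hb⟩ := heq
    simp only [coe_sigma, Set.mem_sigma_iff, mem_coe, hcoefDivisors, mem_filter] at hz hz'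
    rw [← Nat.mul_div_cancel' hz.2.2.1, ← Nat.mul_div_cancel' hz'.2.2.1, hb]

lemma sum_abs_hcoef_le {k : ℕ} (hk : k ≠ 0) (q N : ℕ) :
    ∑ n ∈ Icc 1 N, |(hcoef q k n : ℝ)| ≤ Nat.nthRoot k N * #(friablesUpTo q N) :=
  calc ∑ n ∈ Icc 1 N, |(hcoef q k n : ℝ)|
      ≤ ∑ n ∈ Icc 1 N, (#(hcoefDivisors q k n) : ℝ) :=
        sum_le_sum fun n _ ↦ abs_hcoef_le_card q k n
    _ = #((Icc 1 N).sigma (hcoefDivisors q k)) := by rw [card_sigma]; push_cast; rfl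
    _ ≤ _ := mod_cast card_sigma_hcoefDivisors_le hk q N

lemma card_friablesUpTo_le {q : ℕ} (hq : q ≠ 0) (N : ℕ) :
    #(friablesUpTo q N) ≤ (Nat.log 2 N + 1) ^ #q.primeFactors := by
  have hne : ∀ b ∈ friablesUpTo q N, b ≠ 0 := fun b hb ↦ by
    simp only [friablesUpTo, mem_filter, mem_Icc] at hb; omega
  have hzero : ∀ b ∈ friablesUpTo q N, ∀ p ∉ q.primeFactors, b.factorization p = 0 := by
    intro b hb p hpq
    simp only [friablesUpTo, mem_filter] at hb
    rw [Nat.factorization_eq_zero_iff]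
    by_contra! h
    exact hpq (Nat.mem_primeFactors.2 ⟨h.1, hb.2 p h.1 h.2.1, hq⟩)
  have hexp : ∀ b ∈ friablesUpTo q N, ∀ p, b.factorization p ≤ Nat.log 2 N := by
    intro b hb p
    simp only [friablesUpTo, mem_filter, mem_Icc] at hb
    by_cases hp : p.Prime
    · refine Nat.le_log_of_pow_le one_lt_two ?_
      calc 2 ^ b.factorization p ≤ p ^ b.factorization p := Nat.pow_le_pow_left hp.two_le _
        _ ≤ b := Nat.ordProj_le p (by omega)
        _ ≤ N := hb.1.2
    · simp [Nat.factorization_eq_zero_of_not_prime b hp]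
  calc #(friablesUpTo q N)
      ≤ #(Fintype.piFinset fun _ : q.primeFactors ↦ range (Nat.log 2 N + 1)) := by
        refine card_le_card_of_injOn (fun b p ↦ b.factorization p) ?_ ?_
        · intro b hb
          simpa [Nat.lt_succ_iff] using fun p _ _ _ ↦ hexp b hb p
        · intro b hb b' hb' heq
          refine Nat.factorization_inj (hne b hb) (hne b' hb') <| Finsupp.ext fun p ↦ ?_
          by_cases hpq : p ∈ q.primeFactors
          · exact congrFun heq ⟨p, hpq⟩
          · rw [hzero b hb p hpq, hzero b' hb' p hpq]
    _ = (Nat.log 2 N + 1) ^ #q.primeFactors := by simp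

lemma card_primeFactors_le_primeCounting (q : ℕ) : #q.primeFactors ≤ q.primeCounting := by
  rw [← Nat.primesLE_card_eq_primeCounting]
  exact card_le_card fun p hp ↦
    Nat.mem_primesLE.2 ⟨Nat.le_of_mem_primeFactors hp, Nat.prime_of_mem_primeFactors hp⟩

lemma nthRoot_le_rpow {k : ℕ} (hk : k ≠ 0) (N : ℕ) :
    (Nat.nthRoot k N : ℝ) ≤ (N : ℝ) ^ (1 / (k : ℝ)) := by
  have h : ((Nat.nthRoot k N : ℝ) ^ k) ≤ N := mod_cast Nat.pow_nthRoot_le_iff.2 (Or.inl hk)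
  calc (Nat.nthRoot k N : ℝ) = ((Nat.nthRoot k N : ℝ) ^ k) ^ (1 / (k : ℝ)) := by
        rw [one_div, Real.pow_rpow_inv_natCast (by positivity) hk]
    _ ≤ _ := by gcongr

lemma natLog_floor_add_one_le_two_mul_logb {x : ℝ} (hx : 2 ≤ x) :
    (Nat.log 2 ⌊x⌋₊ + 1 : ℝ) ≤ 2 * Real.logb 2 x := by
  have hfloor : (0 : ℝ) < ⌊x⌋₊ := mod_cast Nat.floor_pos.2 (by linarith)
  have hone : 1 ≤ Real.logb 2 x :=
    (Real.le_logb_iff_rpow_le one_lt_two (by linarith)).2 (by simpa)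
  have hlog : (Nat.log 2 ⌊x⌋₊ : ℝ) ≤ Real.logb 2 x := by
    simpa using (Real.natLog_le_logb ⌊x⌋₊ 2).trans
      (Real.logb_le_logb_of_le one_lt_two hfloor (Nat.floor_le (by linarith)))
  linarith

/-- `∑_{n ≤ x} |h(n)| ≪_{q,k} x^{1/k} (log x)^{π(q)}`. -/
theorem sum_abs_hcoef (k : ℕ) (hk : 2 ≤ k) (q : ℕ) (hq : 2 ≤ q) :
    ∃ C : ℝ, 0 < C ∧ ∀ x : ℝ, 2 ≤ x →
      ∑ n ∈ Finset.Icc 1 ⌊x⌋₊, |(hcoef q k n : ℝ)|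
        ≤ C * x ^ (1 / (k : ℝ)) * Real.log x ^ q.primeCounting := by
  have hlog2 : 0 < Real.log 2 := Real.log_pos one_lt_two
  refine ⟨(2 / Real.log 2) ^ q.primeCounting, by positivity, fun x hx ↦ ?_⟩
  have hk0 : k ≠ 0 := by omega
  have hx0 : 0 ≤ x := by linarith
  set L := Nat.log 2 ⌊x⌋₊
  have hfriables : (#(friablesUpTo q ⌊x⌋₊) : ℝ) ≤ (L + 1 : ℝ) ^ q.primeCounting :=
    calc (#(friablesUpTo q ⌊x⌋₊) : ℝ) ≤ (L + 1 : ℝ) ^ #q.primeFactors :=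
          mod_cast card_friablesUpTo_le (by omega) _
      _ ≤ (L + 1 : ℝ) ^ q.primeCounting :=
          pow_le_pow_right₀ (by simp) (card_primeFactors_le_primeCounting q)
  calc ∑ n ∈ Icc 1 ⌊x⌋₊, |(hcoef q k n : ℝ)|
      ≤ Nat.nthRoot k ⌊x⌋₊ * #(friablesUpTo q ⌊x⌋₊) := sum_abs_hcoef_le hk0 q _
    _ ≤ x ^ (1 / (k : ℝ)) * (2 * Real.logb 2 x) ^ q.primeCounting := by
        gcongr
        · exact (nthRoot_le_rpow hk0 _).trans (by gcongr; exact Nat.floor_le hx0)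
        · exact hfriables.trans (by gcongr; exact natLog_floor_add_one_le_two_mul_logb hx)
    _ = (2 / Real.log 2) ^ q.primeCounting * x ^ (1 / (k : ℝ))
          * Real.log x ^ q.primeCounting := by
        rw [Real.logb, mul_div_left_comm, mul_pow]; ring
end

section
/- Let k ≥ 2 be an integer and q ≥ 2 an integer. Define w(n) = ∑ μ(a), where the sum runs over all pairs of positive integers (a, b) with a^k·b = n such that every prime factor of a divides q and every prime factor of b divides q. There exists a constant C > 0 (depending only on q and k) such that for all real x ≥ 2, ∑_{n ≤ x} |w(n)| ≤ C·x^{1/k}·(log x)^{π(q)}, where π(q) is the number of primes at most q. -/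
/-!
Since `|μ| ≤ 1`, `|w(n)|` is at most the number of factorizations `n = a^k b` with every prime
factor of `b` dividing `q`. Such a pair `(n, a)` with `n ≤ x` is determined by `(b, a)`, where
`a ≤ x^{1/k}` and `b ≤ x` is supported on the primes dividing `q`. Such a `b` is determined by
its exponents at the at most `π(q)` primes dividing `q`, each at most `log₂ x`, so there are at
most `(1 + log₂ x)^{π(q)} ≪ (log x)^{π(q)}` of them.
-/

open Complex Finset
open scoped Classical

/-- `w(n) = ∑ μ(a)` over pairs `(a,b)` of positive integers with `a^k b = n`, every prime
factor of `a` dividing `q` and every prime factor of `b` dividing `q`; the Dirichlet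
convolution of `ν·1_N` with `1_N`, where `N = {n : p ∣ n → p ∣ q}`. -/
noncomputable def wcoef (q k n : ℕ) : ℤ :=
  ∑ a ∈ n.divisors,
    if a ^ k ∣ n ∧ (∀ p : ℕ, p.Prime → p ∣ a → p ∣ q) ∧
        (∀ p : ℕ, p.Prime → p ∣ n / a ^ k → p ∣ q)
    then ArithmeticFunction.moebius a else 0

lemma card_filter_primeFactors_subset_le (P : Finset ℕ) (N : ℕ) :
    #{n ∈ Icc 1 N | n.primeFactors ⊆ P} ≤ (Nat.log 2 N + 1) ^ #P := by
  calc #{n ∈ Icc 1 N | n.primeFactors ⊆ P}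
      ≤ #(P.pi fun _ => range (Nat.log 2 N + 1)) := by
        refine card_le_card_of_injOn (fun n p _ => n.factorization p) ?_ ?_
        · intro n hn
          simp only [coe_filter, mem_Icc, Set.mem_ofPred_eq] at hn
          simp only [mem_coe, mem_pi, mem_range, Nat.lt_succ_iff]
          intro p _
          by_cases hp : p.Prime
          · refine Nat.le_log_of_pow_le one_lt_two ?_
            calc 2 ^ n.factorization p ≤ p ^ n.factorization p := Nat.pow_le_pow_left hp.two_le _
              _ ≤ n := Nat.ordProj_le p (by omega)
              _ ≤ N := hn.1.2
          · simp [Nat.factorization_eq_zero_of_not_prime n hp]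
        · intro m hm n hn hmn
          simp only [coe_filter, mem_Icc, Set.mem_ofPred_eq] at hm hn
          refine Nat.factorization_inj (show m ≠ 0 by omega) (show n ≠ 0 by omega)
            (Finsupp.ext fun p => ?_)
          by_cases hp : p ∈ P
          · exact congrFun (congrFun hmn p) hp
          · rw [Finsupp.notMem_support_iff.mp fun h => hp (hm.2 h),
              Finsupp.notMem_support_iff.mp fun h => hp (hn.2 h)]
    _ = (Nat.log 2 N + 1) ^ #P := by simp

lemma natLog_two_floor_add_one_le {x : ℝ} (hx : 2 ≤ x) :
    (Nat.log 2 ⌊x⌋₊ + 1 : ℝ) ≤ 2 / Real.log 2 * Real.log x := by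
  have hlog : (Nat.log 2 ⌊x⌋₊ : ℝ) ≤ Real.logb 2 x :=
    calc (Nat.log 2 ⌊x⌋₊ : ℝ) ≤ Real.logb 2 ⌊x⌋₊ := by exact_mod_cast Real.natLog_le_logb _ 2
      _ ≤ Real.logb 2 x :=
        Real.logb_le_logb_of_le one_lt_two (by simpa using Nat.floor_pos.mpr (by linarith))
          (Nat.floor_le (by linarith))
  have hone : 1 ≤ Real.logb 2 x := by
    simpa using Real.logb_le_logb_of_le one_lt_two zero_lt_two hx
  calc (Nat.log 2 ⌊x⌋₊ + 1 : ℝ) ≤ 2 * Real.logb 2 x := by linarith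
    _ = 2 / Real.log 2 * Real.log x := by rw [Real.logb]; ring

lemma card_filter_primeFactors_subset_primeFactors_le (q : ℕ) {x : ℝ} (hx : 2 ≤ x) :
    (#{b ∈ Icc 1 ⌊x⌋₊ | b.primeFactors ⊆ q.primeFactors} : ℝ)
      ≤ (2 / Real.log 2 * Real.log x) ^ q.primeCounting :=
  calc (#{b ∈ Icc 1 ⌊x⌋₊ | b.primeFactors ⊆ q.primeFactors} : ℝ)
      ≤ (Nat.log 2 ⌊x⌋₊ + 1 : ℝ) ^ #q.primeFactors := by
        exact_mod_cast card_filter_primeFactors_subset_le _ _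
    _ ≤ (Nat.log 2 ⌊x⌋₊ + 1 : ℝ) ^ q.primeCounting :=
        pow_le_pow_right₀ (by simp) (card_primeFactors_le_primeCounting q)
    _ ≤ (2 / Real.log 2 * Real.log x) ^ q.primeCounting :=
        pow_le_pow_left₀ (by positivity) (natLog_two_floor_add_one_le hx) _

lemma card_filter_pow_le_floor_le {k : ℕ} (hk : k ≠ 0) {x : ℝ} (hx : 0 ≤ x) :
    (#{a ∈ Icc 1 ⌊x⌋₊ | a ^ k ≤ ⌊x⌋₊} : ℝ) ≤ x ^ (1 / (k : ℝ)) := by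
  have hsub : {a ∈ Icc 1 ⌊x⌋₊ | a ^ k ≤ ⌊x⌋₊} ⊆ Icc 1 ⌊x ^ (1 / (k : ℝ))⌋₊ := by
    intro a ha
    simp only [mem_filter, mem_Icc] at ha ⊢
    refine ⟨ha.1.1, Nat.le_floor ?_⟩
    rw [one_div, Real.le_rpow_inv_iff_of_pos (Nat.cast_nonneg a) hx (by positivity),
      Real.rpow_natCast]
    exact_mod_cast (Nat.le_floor_iff hx).mp ha.2
  calc (#{a ∈ Icc 1 ⌊x⌋₊ | a ^ k ≤ ⌊x⌋₊} : ℝ) ≤ #(Icc 1 ⌊x ^ (1 / (k : ℝ))⌋₊) := by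
        exact_mod_cast card_le_card hsub
    _ ≤ x ^ (1 / (k : ℝ)) := by simpa using Nat.floor_le (by positivity)

lemma sum_card_filter_pow_dvd_le (k N : ℕ) (P : ℕ → Prop) [DecidablePred P] :
    ∑ n ∈ Icc 1 N, #{a ∈ n.divisors | a ^ k ∣ n ∧ P (n / a ^ k)}
      ≤ #{b ∈ Icc 1 N | P b} * #{a ∈ Icc 1 N | a ^ k ≤ N} := by
  rw [← card_sigma, ← card_product]
  refine card_le_card_of_injOn (fun na => (na.1 / na.2 ^ k, na.2)) ?_ ?_
  · rintro ⟨n, a⟩ h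
    simp only [coe_sigma, Set.mem_sigma_iff, mem_coe, mem_Icc, mem_filter, Nat.mem_divisors] at h
    obtain ⟨⟨hn, hnN⟩, ⟨han, -⟩, hak, hP⟩ := h
    have hakn : a ^ k ≤ n := Nat.le_of_dvd (by omega) hak
    have ha : 0 < a := Nat.pos_of_dvd_of_pos han (by omega)
    simp only [coe_product, Set.mem_prod, mem_coe, mem_filter, mem_Icc]
    exact ⟨⟨⟨Nat.div_pos hakn (by positivity), (Nat.div_le_self _ _).trans hnN⟩, hP⟩,
      ⟨ha, (Nat.le_of_dvd (by omega) han).trans hnN⟩, hakn.trans hnN⟩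
  · rintro ⟨m, a⟩ hm ⟨n, b⟩ hn hmn
    simp only [coe_sigma, Set.mem_sigma_iff, mem_coe, mem_filter] at hm hn
    obtain ⟨hmn, rfl⟩ := Prod.mk.inj hmn
    rw [← Nat.mul_div_cancel' hm.2.2.1, ← Nat.mul_div_cancel' hn.2.2.1, hmn]

lemma abs_wcoef_le_card {q : ℕ} (hq : q ≠ 0) (k n : ℕ) :
    |wcoef q k n|
      ≤ #{a ∈ n.divisors | a ^ k ∣ n ∧ (n / a ^ k).primeFactors ⊆ q.primeFactors} := by
  rw [wcoef, ← sum_filter]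
  refine (abs_sum_le_sum_abs _ _).trans
    ((sum_le_card_nsmul _ _ 1 fun _ _ => ArithmeticFunction.abs_moebius_le_one).trans ?_)
  rw [nsmul_one, Nat.cast_le]
  refine card_le_card (monotone_filter_right _ fun a _ ⟨hak, _, hb⟩ => ⟨hak, fun p hp => ?_⟩)
  have hp' := Nat.prime_of_mem_primeFactors hp
  exact Nat.mem_primeFactors.mpr ⟨hp', hb p hp' (Nat.dvd_of_mem_primeFactors hp), hq⟩

/-- `∑_{n ≤ x} |w(n)| ≪_{q,k} x^{1/k} (log x)^{π(q)}`. -/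
theorem sum_abs_wcoef (k : ℕ) (hk : 2 ≤ k) (q : ℕ) (hq : 2 ≤ q) :
    ∃ C : ℝ, 0 < C ∧ ∀ x : ℝ, 2 ≤ x →
      ∑ n ∈ Finset.Icc 1 ⌊x⌋₊, |(wcoef q k n : ℝ)|
        ≤ C * x ^ (1 / (k : ℝ)) * Real.log x ^ q.primeCounting := by
  refine ⟨(2 / Real.log 2) ^ q.primeCounting, by positivity, fun x hx => ?_⟩
  have hlog : 0 ≤ Real.log x := Real.log_nonneg (by linarith)
  calc ∑ n ∈ Icc 1 ⌊x⌋₊, |(wcoef q k n : ℝ)|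
      ≤ ∑ n ∈ Icc 1 ⌊x⌋₊,
          (#{a ∈ n.divisors | a ^ k ∣ n ∧ (n / a ^ k).primeFactors ⊆ q.primeFactors} : ℝ) :=
        sum_le_sum fun n _ => by exact_mod_cast abs_wcoef_le_card (by omega) k n
    _ ≤ #{b ∈ Icc 1 ⌊x⌋₊ | b.primeFactors ⊆ q.primeFactors} *
          #{a ∈ Icc 1 ⌊x⌋₊ | a ^ k ≤ ⌊x⌋₊} := by
        exact_mod_cast sum_card_filter_pow_dvd_le k ⌊x⌋₊ (·.primeFactors ⊆ q.primeFactors)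
    _ ≤ (2 / Real.log 2 * Real.log x) ^ q.primeCounting * x ^ (1 / (k : ℝ)) :=
        mul_le_mul (card_filter_primeFactors_subset_primeFactors_le q hx)
          (card_filter_pow_le_floor_le (by omega) (by linarith)) (by positivity) (by positivity)
    _ = _ := by ring
end

section
/- Let k ≥ 2 be an even integer and χ a real non-principal Dirichlet character modulo q. For every complex number s with Re(s) > 1, ∑_{n=1}^{∞} μ^(k)(n)·g_χ(n)·n^{−s} = L(s, χ) · (∏_{p ∣ q} (1 − p^{−s})^{−1}) / ζ(ks), where ζ is the Riemann zeta function and L(s,χ) is the Dirichlet L-function of χ. -/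
/-!
Both sides have Euler products over the primes. Put `x = g(p) p^{-s}`. Since `g` is completely
multiplicative and `n` is `k`-free exactly when every exponent in its factorisation is below `k`,
the local factor of the left side is `∑_{e<k} x^e = (1 - x^k)/(1 - x)`. As `g(p) = ±1` and `k` is
even, `x^k = p^{-ks}`, so `1 - x^k` is the inverse of the local factor of `ζ(ks)`. What remains,
`(1 - x)⁻¹`, is the local factor of `L(s, χ)` at `p ∤ q` and that of `(1 - p^{-s})⁻¹` at `p ∣ q`.
-/

open Complex Finset
open scoped Classical

/-- The paper's `μ^(k) · g`. -/
noncomputable def kFreePart {R : Type*} [Zero R] (k : ℕ) (g : ℕ → R) (n : ℕ) : R :=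
  if ∀ p : ℕ, p.Prime → ¬ p ^ k ∣ n then g n else 0

namespace Nat

lemma kFree_mul_iff {k m n : ℕ} (hk : k ≠ 0) (hmn : m.Coprime n) :
    (∀ p : ℕ, p.Prime → ¬ p ^ k ∣ m * n) ↔
      (∀ p : ℕ, p.Prime → ¬ p ^ k ∣ m) ∧ ∀ p : ℕ, p.Prime → ¬ p ^ k ∣ n := by
  have key (p : ℕ) (hp : p.Prime) : p ^ k ∣ m * n ↔ p ^ k ∣ m ∨ p ^ k ∣ n :=
    hmn.isPrimePow_dvd_mul (hp.prime.isPrimePow.pow hk)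
  constructor
  · intro h
    exact ⟨fun p hp hm => h p hp ((key p hp).2 (.inl hm)),
      fun p hp hn => h p hp ((key p hp).2 (.inr hn))⟩
  · rintro ⟨hm, hn⟩ p hp hmn
    exact ((key p hp).1 hmn).elim (hm p hp) (hn p hp)

lemma kFree_prime_pow_iff {k p e : ℕ} (hp : p.Prime) :
    (∀ r : ℕ, r.Prime → ¬ r ^ k ∣ p ^ e) ↔ e < k := by
  constructor
  · intro h
    by_contra! hle
    exact h p hp (pow_dvd_pow p hle)
  · intro he r hr hdvd
    have hrp : r = p := (prime_dvd_prime_iff_eq hr hp).1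
      (hr.dvd_of_dvd_pow ((dvd_pow_self r (by omega)).trans hdvd))
    subst hrp
    have := (pow_dvd_pow_iff_le_right hr.one_lt).1 hdvd
    omega

end Nat

section kFreePart

variable {R : Type*} [MonoidWithZero R] {k : ℕ} (g : ℕ →* R)

lemma kFreePart_mul (hk : k ≠ 0) {m n : ℕ} (hmn : m.Coprime n) :
    kFreePart k g (m * n) = kFreePart k g m * kFreePart k g n := by
  unfold kFreePart
  rw [Nat.kFree_mul_iff hk hmn, map_mul]
  split_ifs <;> simp_all

lemma kFreePart_prime_pow {p : ℕ} (hp : p.Prime) (e : ℕ) :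
    kFreePart k g (p ^ e) = if e < k then g p ^ e else 0 := by
  simp only [kFreePart, Nat.kFree_prime_pow_iff hp, map_pow]

lemma kFreePart_one (hk : k ≠ 0) : kFreePart k g 1 = 1 := by
  simpa [Nat.pos_of_ne_zero hk] using kFreePart_prime_pow (k := k) g Nat.prime_two 0

end kFreePart

lemma MonoidHom.norm_apply_le_one_of_forall_prime {R : Type*} [SeminormedRing R] [NormOneClass R]
    (g : ℕ →* R) (hg : ∀ p : ℕ, p.Prime → ‖g p‖ ≤ 1) {n : ℕ} (hn : n ≠ 0) : ‖g n‖ ≤ 1 := by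
  induction n using induction_on_primes with
  | zero => exact absurd rfl hn
  | one => simp
  | prime_mul p a hp ih =>
    rw [map_mul]
    exact (norm_mul_le _ _).trans
      (mul_le_one₀ (hg p hp) (norm_nonneg _) (ih (right_ne_zero_of_mul hn)))

lemma MulChar.IsQuadratic.pow_apply_of_even {R R' : Type*} [CommMonoid R] [CommRing R']
    {χ : MulChar R R'} (hχ : χ.IsQuadratic) {n : ℕ} (hn : Even n) {a : R} (ha : IsUnit a) :
    χ a ^ n = 1 := by
  rw [← ha.unit_spec, ← χ.pow_apply_coe, hχ.pow_even hn, MulChar.one_apply_coe]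

lemma tsum_ite_lt_pow {K : Type*} [Field K] [TopologicalSpace K] {x : K} (hx : x ≠ 1) (k : ℕ) :
    ∑' e : ℕ, (if e < k then x ^ e else 0) = (1 - x ^ k) * (1 - x)⁻¹ := by
  rw [tsum_eq_sum (s := range k) fun e he => if_neg (by simpa using he),
    sum_congr rfl fun e he => if_pos (mem_range.1 he),
    eq_mul_inv_iff_mul_eq₀ (sub_ne_zero.2 hx.symm), geom_sum_mul_neg]

lemma hasProd_ite_dvd_primeFactors {M : Type*} [CommMonoid M] [TopologicalSpace M] {n : ℕ}
    (hn : n ≠ 0) (u : ℕ → M) :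
    HasProd (fun p : Nat.Primes => if (p : ℕ) ∣ n then u p else 1) (∏ p ∈ n.primeFactors, u p) := by
  have hprod : ∏ p ∈ n.primeFactors.subtype Nat.Prime, (if (p : ℕ) ∣ n then u p else 1) =
      ∏ p ∈ n.primeFactors, u p := by
    rw [prod_subtype_of_mem (fun p => if p ∣ n then u p else 1)
      fun _ hp => Nat.prime_of_mem_primeFactors hp]
    exact prod_congr rfl fun p hp => if_pos (Nat.dvd_of_mem_primeFactors hp)
  rw [← hprod]
  refine hasProd_prod_of_ne_finset_one fun p hp => if_neg fun hpn => hp ?_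
  exact mem_subtype.2 (Nat.mem_primeFactors.2 ⟨p.prop, hpn, hn⟩)

theorem kFreePart_eulerProduct_hasProd {k : ℕ} (hk : k ≠ 0) (g : ℕ →* ℂ)
    (hg : ∀ p : ℕ, p.Prime → g p ^ k = 1) {s : ℂ} (hs : 1 < s.re) :
    HasProd (fun p : Nat.Primes => (1 - (p : ℂ) ^ (-(k * s))) * (1 - g p * (p : ℂ) ^ (-s))⁻¹)
      (∑' n : ℕ, kFreePart k g n * (n : ℂ) ^ (-s)) := by
  set F : ℕ → ℂ := fun n => kFreePart k g n * (n : ℂ) ^ (-s)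
  have hs₀ : -s ≠ 0 := neg_ne_zero.2 (ne_zero_of_one_lt_re hs)
  have hF₁ : F 1 = 1 := by simp [F, kFreePart_one g hk]
  have hF₀ : F 0 = 0 := by simp [F, zero_cpow hs₀]
  have hFmul {m n : ℕ} (hmn : m.Coprime n) : F (m * n) = F m * F n := by
    simp only [F, kFreePart_mul g hk hmn, Nat.cast_mul, natCast_mul_natCast_cpow]
    ring
  have hg_norm (p : ℕ) (hp : p.Prime) : ‖g p‖ = 1 := norm_eq_one_of_pow_eq_one (hg p hp) hk
  have hsum : Summable (‖F ·‖) := by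
    refine (summable_riemannZetaSummand hs).of_nonneg_of_le (fun _ => norm_nonneg _) fun n => ?_
    rcases eq_or_ne n 0 with rfl | hn
    · simp [hF₀]
    have hfn : ‖kFreePart k g n‖ ≤ 1 := by
      unfold kFreePart
      split_ifs
      · exact g.norm_apply_le_one_of_forall_prime (fun p hp => (hg_norm p hp).le) hn
      · simp
    simpa [F, riemannZetaSummandHom] using mul_le_of_le_one_left (norm_nonneg _) hfn
  convert EulerProduct.eulerProduct_hasProd hF₁ hFmul hsum hF₀ using 2 with p
  set x := g p * (p : ℂ) ^ (-s)
  have hx : ‖x‖ < 1 := by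
    rw [norm_mul, hg_norm p p.prop, one_mul]
    exact (norm_prime_cpow_le_one_half p hs).trans_lt (by norm_num)
  have hxk : x ^ k = (p : ℂ) ^ (-(k * s)) := by
    rw [mul_pow, hg p p.prop, one_mul, ← cpow_nat_mul, mul_neg]
  have hFp (e : ℕ) : F (p ^ e) = if e < k then x ^ e else 0 := by
    have hpow : (((p ^ e : ℕ) : ℂ)) ^ (-s) = ((p : ℂ) ^ (-s)) ^ e := by
      rw [Nat.cast_pow, ← natCast_cpow_natCast_mul, cpow_nat_mul]
    simp only [F, kFreePart_prime_pow g p.prop, hpow, x, mul_pow]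
    split_ifs <;> simp
  rw [tsum_congr hFp, tsum_ite_lt_pow (ne_of_apply_ne norm (by simpa using hx.ne)), hxk]

theorem DirichletCharacter.modified_eulerProduct_hasProd {q : ℕ} [NeZero q] (χ : DirichletCharacter ℂ q)
    (g : ℕ → ℂ) (hg : ∀ p : ℕ, p.Prime → g p = if p ∣ q then 1 else χ p) {s : ℂ}
    (hs : 1 < s.re) :
    HasProd (fun p : Nat.Primes => (1 - g p * (p : ℂ) ^ (-s))⁻¹)
      (χ.LFunction s * ∏ p ∈ q.primeFactors, (1 - (p : ℂ) ^ (-s))⁻¹) := by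
  rw [χ.LFunction_eq_LSeries hs]
  convert (χ.LSeries_eulerProduct_hasProd hs).mul
    (hasProd_ite_dvd_primeFactors (NeZero.ne q) fun p => (1 - (p : ℂ) ^ (-s))⁻¹) using 2 with p
  rw [hg p p.prop]
  split_ifs with hpq
  · rw [χ.map_nonunit ((ZMod.isUnit_prime_iff_not_dvd p.prop).not.2 (not_not.2 hpq))]
    simp
  · rw [mul_one]

theorem dirichlet_series_factorization_even_general
    (k : ℕ) (hk : 2 ≤ k) (hkeven : Even k)
    (q : ℕ) [NeZero q] (χ : DirichletCharacter ℂ q)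
    (hχreal : ∀ n : ZMod q, χ n = -1 ∨ χ n = 0 ∨ χ n = 1)
    (g : ℕ → ℂ) (hg1 : g 1 = 1)
    (hgmul : ∀ m n : ℕ, g (m * n) = g m * g n)
    (hgp : ∀ p : ℕ, p.Prime → g p = if p ∣ q then 1 else χ (p : ZMod q))
    (f : ℕ → ℂ)
    (hf : ∀ n : ℕ, f n = if ∀ p : ℕ, p.Prime → ¬ p ^ k ∣ n then g n else 0) :
    ∀ s : ℂ, 1 < s.re →
      ∑' n : ℕ, f n * (n : ℂ) ^ (-s)
        = DirichletCharacter.LFunction χ s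
            * (∏ p ∈ q.primeFactors, (1 - (p : ℂ) ^ (-s))⁻¹)
            / riemannZeta ((k : ℂ) * s) := by
  intro s hs
  let G : ℕ →* ℂ := ⟨⟨g, hg1⟩, hgmul⟩
  have hk₀ : k ≠ 0 := by omega
  have hks : 1 < ((k : ℂ) * s).re := by
    have hk₁ : (1 : ℝ) ≤ k := by exact_mod_cast Nat.one_le_iff_ne_zero.2 hk₀
    simp only [mul_re, natCast_re, natCast_im, zero_mul, sub_zero]
    nlinarith
  have hGk (p : ℕ) (hp : p.Prime) : G p ^ k = 1 := by
    change g p ^ k = 1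
    rw [hgp p hp]
    split_ifs with hpq
    · exact one_pow k
    · exact MulChar.IsQuadratic.pow_apply_of_even (fun a => by have := hχreal a; tauto) hkeven
        ((ZMod.isUnit_prime_iff_not_dvd hp).2 hpq)
  have hlhs : HasProd (fun p : Nat.Primes => (1 - g p * (p : ℂ) ^ (-s))⁻¹)
      ((∑' n : ℕ, f n * (n : ℂ) ^ (-s)) * riemannZeta (k * s)) := by
    rw [show f = kFreePart k G from funext hf]
    convert (kFreePart_eulerProduct_hasProd hk₀ G hGk hs).mul (riemannZeta_eulerProduct_hasProd hks)
      using 2 with p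
    rw [mul_right_comm, mul_inv_cancel₀ (one_sub_prime_cpow_ne_zero p.prop hks), one_mul]
    rfl
  rw [eq_div_iff (riemannZeta_ne_zero_of_one_lt_re hks)]
  exact hlhs.unique (χ.modified_eulerProduct_hasProd g hgp hs)

/-- Even case Euler factorization: for `Re(s) > 1`,
`∑ μ^(k)(n) g_χ(n) n^{-s} = L(s,χ) · P(s) / ζ(ks)` with `P(s) = ∏_{p ∣ q} (1 - p^{-s})⁻¹`. -/
theorem dirichlet_series_factorization_even
    (k : ℕ) (hk : 2 ≤ k) (hkeven : Even k)
    (q : ℕ) [NeZero q] (χ : DirichletCharacter ℂ q)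
    (hχreal : ∀ n : ZMod q, χ n = -1 ∨ χ n = 0 ∨ χ n = 1) (hχ : χ ≠ 1)
    (g : ℕ → ℂ) (hg1 : g 1 = 1)
    (hgmul : ∀ m n : ℕ, g (m * n) = g m * g n)
    (hgp : ∀ p : ℕ, p.Prime → g p = if p ∣ q then 1 else χ (p : ZMod q))
    (f : ℕ → ℂ)
    (hf : ∀ n : ℕ, f n = if ∀ p : ℕ, p.Prime → ¬ p ^ k ∣ n then g n else 0) :
    ∀ s : ℂ, 1 < s.re →
      ∑' n : ℕ, f n * (n : ℂ) ^ (-s)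
        = DirichletCharacter.LFunction χ s
            * (∏ p ∈ q.primeFactors, (1 - (p : ℂ) ^ (-s))⁻¹)
            / riemannZeta ((k : ℂ) * s) :=
  dirichlet_series_factorization_even_general k hk hkeven q χ hχreal g hg1 hgmul hgp f hf
end

section
/- For every ε with 0 < ε ≤ 1 there exists a constant C > 0 (depending only on ε) such that for every integer q ≥ 2 and every complex number s with Re(s) ≥ ε, |∏_{p ∣ q} (1 − p^{−s})^{−1}| ≤ C·q^{ε}, where the product runs over the primes p dividing q. -/
open Complex Finset

/-- For `0 < ε ≤ 1` there is `C = C(ε) > 0` such that for every `q ≥ 2`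
and every `s` with `Re(s) ≥ ε`, `|∏_{p ∣ q} (1 - p^{-s})⁻¹| ≤ C q^ε`. -/
theorem euler_factor_product_bound :
    ∀ ε : ℝ, 0 < ε → ε ≤ 1 →
      ∃ C : ℝ, 0 < C ∧ ∀ q : ℕ, 2 ≤ q → ∀ s : ℂ, ε ≤ s.re →
        ‖∏ p ∈ q.primeFactors, (1 - (p : ℂ) ^ (-s))⁻¹‖ ≤ C * (q : ℝ) ^ ε := by
  intro ε hε hε1
  set A : ℝ := (1 - (2:ℝ) ^ (-ε))⁻¹ with hA
  have h2ε : (2:ℝ) ^ (-ε) < 1 :=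
    Real.rpow_lt_one_of_one_lt_of_neg (by norm_num) (by linarith)
  have h2εpos : (0:ℝ) < (2:ℝ) ^ (-ε) := Real.rpow_pos_of_pos (by norm_num) _
  have hApos : 0 < A := inv_pos.mpr (by linarith)
  have hA1 : 1 ≤ A := by
    rw [hA, le_inv_comm₀ one_pos (by linarith)]
    simp; linarith
  set N : ℕ := ⌈(2:ℝ) ^ (1/ε)⌉₊ with hN
  refine ⟨A ^ N, pow_pos hApos N, ?_⟩
  intro q hq s hs
  set f : ℕ → ℝ := fun p => if p < N then A else (p:ℝ)^ε with hf
  have hfnn : ∀ p, 0 ≤ f p := by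
    intro p
    rw [hf]
    dsimp only
    split
    · exact hApos.le
    · exact Real.rpow_nonneg (Nat.cast_nonneg p) _
  -- Each factor is bounded by f p.
  have key : ∀ p ∈ q.primeFactors, ‖(1 - (p : ℂ) ^ (-s))⁻¹‖ ≤ f p := by
    intro p hp
    have hpp : p.Prime := Nat.prime_of_mem_primeFactors hp
    have hp2 : (2:ℝ) ≤ (p:ℝ) := by exact_mod_cast hpp.two_le
    have hp1 : (1:ℝ) ≤ (p:ℝ) := by linarith
    have hnorm : ‖(p : ℂ) ^ (-s)‖ = (p:ℝ) ^ (-s).re :=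
      norm_natCast_cpow_of_pos hpp.pos _
    have hle : ‖(p : ℂ) ^ (-s)‖ ≤ (p:ℝ) ^ (-ε) := by
      rw [hnorm]
      apply Real.rpow_le_rpow_of_exponent_le hp1
      simp only [neg_re]; linarith
    have hpεpos : (0:ℝ) < (p:ℝ) ^ (-ε) := Real.rpow_pos_of_pos (by linarith) _
    have hlow : 1 - (p:ℝ) ^ (-ε) ≤ ‖1 - (p : ℂ) ^ (-s)‖ := by
      calc 1 - (p:ℝ) ^ (-ε) ≤ 1 - ‖(p : ℂ) ^ (-s)‖ := by linarith
        _ ≤ ‖(1:ℂ)‖ - ‖(p : ℂ) ^ (-s)‖ := by simp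
        _ ≤ ‖1 - (p : ℂ) ^ (-s)‖ := norm_sub_norm_le _ _
    rw [norm_inv]
    rw [hf]; dsimp only
    split
    · -- small prime: bound by A
      have hp2ε : (p:ℝ) ^ (-ε) ≤ (2:ℝ) ^ (-ε) := by
        rw [Real.rpow_neg (by norm_num : (0:ℝ) ≤ 2), Real.rpow_neg (by linarith)]
        exact inv_anti₀ (Real.rpow_pos_of_pos (by norm_num) _)
          (Real.rpow_le_rpow (by norm_num) hp2 hε.le)
      have : 1 - (2:ℝ) ^ (-ε) ≤ ‖1 - (p : ℂ) ^ (-s)‖ := by linarith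
      rw [hA]
      exact inv_anti₀ (by linarith) this
    · -- large prime: p ≥ N, so p^ε ≥ 2
      rename_i hNp
      push_neg at hNp
      have hNle : (2:ℝ) ^ (1/ε) ≤ (p:ℝ) := by
        calc (2:ℝ) ^ (1/ε) ≤ (N:ℝ) := Nat.le_ceil _
          _ ≤ (p:ℝ) := by exact_mod_cast hNp
      have hpε2 : (2:ℝ) ≤ (p:ℝ) ^ ε := by
        have h1 : ((2:ℝ) ^ (1/ε)) ^ ε ≤ (p:ℝ) ^ ε :=
          Real.rpow_le_rpow (Real.rpow_nonneg (by norm_num) _) hNle hε.le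
        rwa [← Real.rpow_mul (by norm_num : (0:ℝ) ≤ 2),
          one_div_mul_cancel hε.ne', Real.rpow_one] at h1
      have hhalf : (p:ℝ) ^ (-ε) ≤ 1/2 := by
        rw [Real.rpow_neg (by linarith)]
        rw [inv_le_comm₀ (Real.rpow_pos_of_pos (by linarith) _) (by norm_num)]
        linarith
      calc ‖1 - (p : ℂ) ^ (-s)‖⁻¹ ≤ (1/2 : ℝ)⁻¹ :=
            inv_anti₀ (by norm_num) (by linarith)
        _ = 2 := by norm_num
        _ ≤ (p:ℝ) ^ ε := hpε2
  have h1 : ‖∏ p ∈ q.primeFactors, (1 - (p : ℂ) ^ (-s))⁻¹‖ ≤ ∏ p ∈ q.primeFactors, f p := by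
    rw [norm_prod]
    exact Finset.prod_le_prod (fun p _ => norm_nonneg _) key
  refine h1.trans ?_
  -- split the product
  rw [← Finset.prod_filter_mul_prod_filter_not q.primeFactors (fun p => p < N)]
  have hsmall : ∏ p ∈ q.primeFactors.filter (fun p => p < N), f p ≤ A ^ N := by
    have hcard : (q.primeFactors.filter (fun p => p < N)).card ≤ N := by
      have hsub : q.primeFactors.filter (fun p => p < N) ⊆ Finset.range N := by
        intro p hp
        simp only [Finset.mem_filter] at hp
        exact Finset.mem_range.mpr hp.2
      simpa using Finset.card_le_card hsub
    calc ∏ p ∈ q.primeFactors.filter (fun p => p < N), f p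
        = A ^ (q.primeFactors.filter (fun p => p < N)).card := by
          rw [← Finset.prod_const]
          apply Finset.prod_congr rfl
          intro p hp
          simp only [Finset.mem_filter] at hp
          rw [hf]; simp [hp.2]
      _ ≤ A ^ N := pow_le_pow_right₀ hA1 hcard
  have hlarge : ∏ p ∈ q.primeFactors.filter (fun p => ¬ p < N), f p ≤ (q:ℝ) ^ ε := by
    have heq : ∏ p ∈ q.primeFactors.filter (fun p => ¬ p < N), f p
        = ∏ p ∈ q.primeFactors.filter (fun p => ¬ p < N), ((p:ℝ)) ^ ε := by
      apply Finset.prod_congr rfl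
      intro p hp
      simp only [Finset.mem_filter] at hp
      rw [hf]; simp [hp.2]
    rw [heq, Real.finset_prod_rpow _ _ (fun p _ => Nat.cast_nonneg p) ε]
    apply Real.rpow_le_rpow (Finset.prod_nonneg (fun p _ => Nat.cast_nonneg p)) ?_ hε.le
    have hdvd : (∏ p ∈ q.primeFactors.filter (fun p => ¬ p < N), p) ∣ q := by
      refine dvd_trans ?_ (Nat.prod_primeFactors_dvd q)
      exact Finset.prod_dvd_prod_of_subset _ _ _ (Finset.filter_subset _ _)
    have h2 := Nat.le_of_dvd (by omega) hdvd
    calc (∏ p ∈ q.primeFactors.filter (fun p => ¬ p < N), ((p:ℝ)))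
        = ((∏ p ∈ q.primeFactors.filter (fun p => ¬ p < N), p : ℕ) : ℝ) := by push_cast; ring
      _ ≤ (q:ℝ) := by exact_mod_cast h2
  calc (∏ p ∈ q.primeFactors.filter (fun p => p < N), f p) *
        ∏ p ∈ q.primeFactors.filter (fun p => ¬ p < N), f p
      ≤ A ^ N * (q:ℝ) ^ ε := by
        apply mul_le_mul hsmall hlarge (Finset.prod_nonneg (fun p _ => hfnn p))
          (pow_nonneg hApos.le N)
end

section
/- Let k ≥ 3 be an odd integer and χ a real non-principal Dirichlet character modulo q. Assume that every zero of L(s,χ) with real part strictly between 0 and 1 has real part 1/2. Then there exists a function G : ℂ → ℂ that is differentiable (holomorphic) on the open half-plane {s : Re(s) > 1/(2k)} and satisfies G(s) = ∑_{n=1}^{∞} μ^(k)(n)·g_χ(n)·n^{−s} for every s with Re(s) > 1. -/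
/-!
Write `L_g(s) = ∏_p (1 - g(p) p^{-s})⁻¹` for the L-function of `g = g_χ`. The Euler factor of
`∑ μ^(k)(n) g(n) n^{-s}` at `p` is the truncated geometric series `∑_{e<k} x^e = (1 - x^k)/(1 - x)`
with `x = g(p) p^{-s}`; since `g(p) ∈ {-1, 0, 1}` and `k` is odd, `x^k = g(p) p^{-ks}`, so for
`Re s > 1` the series equals `L_g(s) / L_g(ks)`. Now `L_g` is `L(s, χ)` times the finitely many
factors `(1 - p^{-s})⁻¹`, `p ∣ q`, hence holomorphic on `Re s > 0`, and by the Riemann hypothesis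
for `L(s, χ)` together with its nonvanishing on `Re s ≥ 1` it has no zeros on `Re s > 1/2`.
Hence `L_g(s) / L_g(ks)` is holomorphic on `Re s > 1/(2k)`.
-/

open Complex Finset
open scoped Classical

def IsKFree (k n : ℕ) : Prop := ∀ p : ℕ, p.Prime → ¬ p ^ k ∣ n

namespace IsKFree

variable {k : ℕ}

lemma one (hk : k ≠ 0) : IsKFree k 1 := fun _ hp h ↦
  (Nat.one_lt_pow hk hp.one_lt).ne' (Nat.eq_one_of_dvd_one h)

lemma not_zero (k : ℕ) : ¬ IsKFree k 0 := fun h ↦ h 2 Nat.prime_two (dvd_zero _)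

lemma mul_iff {m n : ℕ} (hk : k ≠ 0) (hmn : m.Coprime n) :
    IsKFree k (m * n) ↔ IsKFree k m ∧ IsKFree k n := by
  refine ⟨fun h ↦ ⟨fun p hp hm ↦ h p hp (hm.mul_right n), fun p hp hn ↦ h p hp (hn.mul_left m)⟩,
    fun ⟨hm, hn⟩ p hp hmn' ↦ ?_⟩
  rcases (hmn.isPrimePow_dvd_mul (hp.isPrimePow.pow hk)).mp hmn' with h | h
  · exact hm p hp h
  · exact hn p hp h

lemma prime_pow_iff {p e : ℕ} (hp : p.Prime) : IsKFree k (p ^ e) ↔ e < k := by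
  refine ⟨fun h ↦ ?_, fun he r hr hdvd ↦ ?_⟩
  · by_contra! hke
    exact h p hp (pow_dvd_pow p hke)
  · have hrp : r = p :=
      (Nat.prime_dvd_prime_iff_eq hr hp).mp
        (hr.dvd_of_dvd_pow ((dvd_pow_self r (by omega)).trans hdvd))
    subst hrp
    exact absurd ((Nat.pow_dvd_pow_iff_le_right hr.one_lt).mp hdvd) (by omega)

end IsKFree

noncomputable def kFreeRestrict {R : Type*} [Zero R] (k : ℕ) (g : ℕ → R) (n : ℕ) : R :=
  if IsKFree k n then g n else 0

lemma kFreeRestrict_zero {R : Type*} [Zero R] (k : ℕ) (g : ℕ → R) : kFreeRestrict k g 0 = 0 :=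
  if_neg (IsKFree.not_zero k)

section kFreeRestrict

variable {R : Type*} [MonoidWithZero R] {k : ℕ} (g : ℕ →* R)

lemma kFreeRestrict_one (hk : k ≠ 0) : kFreeRestrict k g 1 = 1 := by
  rw [kFreeRestrict, if_pos (IsKFree.one hk), map_one]

lemma kFreeRestrict_mul {m n : ℕ} (hk : k ≠ 0) (hmn : m.Coprime n) :
    kFreeRestrict k g (m * n) = kFreeRestrict k g m * kFreeRestrict k g n := by
  simp only [kFreeRestrict, IsKFree.mul_iff hk hmn, map_mul]
  split_ifs <;> simp_all

lemma kFreeRestrict_prime_pow {p : ℕ} (hp : p.Prime) (e : ℕ) :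
    kFreeRestrict k g (p ^ e) = if e < k then g p ^ e else 0 := by
  simp only [kFreeRestrict, IsKFree.prime_pow_iff hp, map_pow]

end kFreeRestrict

lemma Odd.pow_eq_self_of_sign {M : Type*} [MonoidWithZero M] [HasDistribNeg M] {k : ℕ} (hk : Odd k)
    {x : M} (hx : x = -1 ∨ x = 0 ∨ x = 1) : x ^ k = x := by
  rcases hx with rfl | rfl | rfl
  · exact hk.neg_one_pow
  · exact zero_pow hk.pos.ne'
  · exact one_pow k

lemma norm_natCast_cpow_neg_lt_one {p : ℕ} (hp : 1 < p) {s : ℂ} (hs : 0 < s.re) :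
    ‖(p : ℂ) ^ (-s)‖ < 1 := by
  rw [norm_natCast_cpow_of_pos (by omega)]
  exact Real.rpow_lt_one_of_one_lt_of_neg (mod_cast hp) (by simpa using hs)

lemma one_sub_natCast_cpow_neg_ne_zero {p : ℕ} (hp : 1 < p) {w : ℂ} (hw : 0 < w.re) :
    1 - (p : ℂ) ^ (-w) ≠ 0 :=
  sub_ne_zero.mpr fun h ↦ by simpa [← h] using norm_natCast_cpow_neg_lt_one hp hw

lemma MonoidHom.norm_le_one_of_prime (g : ℕ →* ℂ) (hg : ∀ p : ℕ, p.Prime → ‖g p‖ ≤ 1) (n : ℕ) :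
    ‖g n‖ ≤ 1 := by
  induction n using Nat.recOnMul with
  | zero =>
    have hidem : ‖g 0‖ * ‖g 0‖ = ‖g 0‖ := by rw [← norm_mul, ← map_mul, mul_zero]
    nlinarith [norm_nonneg (g 0)]
  | one => simp
  | prime p hp => exact hg p hp
  | mul a b ha hb => simpa only [map_mul, norm_mul] using mul_le_one₀ ha (norm_nonneg _) hb

section EulerProduct

variable {k : ℕ} (g : ℕ →* ℂ)

lemma tsum_kFreeRestrict_prime_pow {p : ℕ} (hp : p.Prime) (hgp : ‖g p‖ ≤ 1)
    (hgk : g p ^ k = g p) {s : ℂ} (hs : 0 < s.re) :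
    ∑' e : ℕ, kFreeRestrict k g (p ^ e) * ((p ^ e : ℕ) : ℂ) ^ (-s)
      = (1 - g p * (p : ℂ) ^ (-s))⁻¹ * (1 - g p * (p : ℂ) ^ (-(k * s))) := by
  set x := g p * (p : ℂ) ^ (-s)
  have hterm (e : ℕ) : kFreeRestrict k g (p ^ e) * ((p ^ e : ℕ) : ℂ) ^ (-s)
      = if e < k then x ^ e else 0 := by
    rw [kFreeRestrict_prime_pow g hp, Nat.cast_pow, ← natCast_cpow_natCast_mul, cpow_nat_mul]
    split_ifs <;> simp only [x, mul_pow, zero_mul]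
  have hxk : x ^ k = g p * (p : ℂ) ^ (-(k * s)) := by
    rw [mul_pow, hgk, ← cpow_nat_mul, mul_neg]
  have hx : ‖x‖ < 1 := by
    rw [norm_mul]
    exact (mul_le_of_le_one_left (norm_nonneg _) hgp).trans_lt
      (norm_natCast_cpow_neg_lt_one hp.one_lt hs)
  calc ∑' e : ℕ, kFreeRestrict k g (p ^ e) * ((p ^ e : ℕ) : ℂ) ^ (-s)
      = ∑ e ∈ range k, x ^ e := by
        rw [tsum_congr hterm, tsum_eq_sum (s := range k) (fun e he ↦ if_neg (by simpa using he))]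
        exact sum_congr rfl fun e he ↦ if_pos (mem_range.mp he)
    _ = (1 - x)⁻¹ * (1 - x ^ k) := by
        rw [geom_sum_eq (fun h ↦ by simp [h] at hx), ← neg_div_neg_eq, neg_sub, neg_sub,
          div_eq_inv_mul]
    _ = _ := by rw [hxk]

lemma summable_norm_mul_natCast_cpow {F : ℕ → ℂ} (hF : ∀ n, ‖F n‖ ≤ 1) {s : ℂ} (hs : 1 < s.re) :
    Summable fun n : ℕ ↦ ‖F n * (n : ℂ) ^ (-s)‖ := by
  refine (summable_riemannZetaSummand hs).of_nonneg_of_le (fun _ ↦ norm_nonneg _) fun n ↦ ?_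
  rw [norm_mul]
  exact mul_le_of_le_one_left (norm_nonneg _) (hF n)

variable (hk : k ≠ 0) (hg : ∀ n, ‖g n‖ ≤ 1) (hgk : ∀ p : ℕ, p.Prime → g p ^ k = g p)
include hk hg hgk

theorem hasProd_kFreeRestrict {s : ℂ} (hs : 1 < s.re) :
    HasProd ({p : ℕ | p.Prime}.mulIndicator
        fun p ↦ (1 - g p * (p : ℂ) ^ (-s))⁻¹ * (1 - g p * (p : ℂ) ^ (-(k * s))))
      (∑' n : ℕ, kFreeRestrict k g n * (n : ℂ) ^ (-s)) := by
  have hF (n : ℕ) : ‖kFreeRestrict k g n‖ ≤ 1 := by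
    unfold kFreeRestrict
    split_ifs
    exacts [hg n, by simp]
  have h := EulerProduct.eulerProduct_hasProd_mulIndicator
    (f := fun n : ℕ ↦ kFreeRestrict k g n * (n : ℂ) ^ (-s))
    (by simp [kFreeRestrict_one g hk])
    (fun hmn ↦ by rw [kFreeRestrict_mul g hk hmn, Nat.cast_mul, natCast_mul_natCast_cpow]; ring)
    (summable_norm_mul_natCast_cpow hF hs) (by simp [kFreeRestrict_zero])
  rwa [Set.mulIndicator_congr (s := {p : ℕ | p.Prime}) fun p hp ↦
    tsum_kFreeRestrict_prime_pow g hp (hg p) (hgk p hp) (by linarith)] at h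

theorem tsum_kFreeRestrict_eq_div {s a b : ℂ} (hs : 1 < s.re)
    (ha : HasProd ({p : ℕ | p.Prime}.mulIndicator fun p ↦ (1 - g p * (p : ℂ) ^ (-s))⁻¹) a)
    (hb : HasProd ({p : ℕ | p.Prime}.mulIndicator fun p ↦ (1 - g p * (p : ℂ) ^ (-(k * s)))⁻¹) b)
    (hb0 : b ≠ 0) :
    ∑' n : ℕ, kFreeRestrict k g n * (n : ℂ) ^ (-s) = a / b := by
  refine (hasProd_kFreeRestrict g hk hg hgk hs).unique ((ha.div₀ hb hb0).congr_fun fun p ↦ ?_)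
  by_cases hp : p.Prime <;> simp [hp]

end EulerProduct

namespace DirichletCharacter

variable {q : ℕ} [NeZero q] (χ : DirichletCharacter ℂ q)

/-- The L-function of `g_χ`: the Euler factors of `L(s, χ)` at `p ∣ q`, which are `1`, are replaced
by `(1 - p^{-s})⁻¹`. -/
noncomputable def modifiedLFunction (w : ℂ) : ℂ :=
  LFunction χ w * ∏ p ∈ q.primeFactors, (1 - (p : ℂ) ^ (-w))⁻¹

lemma hasProd_modifiedLFunction (g : ℕ → ℂ)
    (hgp : ∀ p : ℕ, p.Prime → g p = if p ∣ q then 1 else χ (p : ZMod q)) {w : ℂ} (hw : 1 < w.re) :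
    HasProd ({p : ℕ | p.Prime}.mulIndicator fun p ↦ (1 - g p * (p : ℂ) ^ (-w))⁻¹)
      (modifiedLFunction χ w) := by
  have hL : HasProd
      ({p : ℕ | p.Prime}.mulIndicator fun p ↦ (1 - χ (p : ZMod q) * (p : ℂ) ^ (-w))⁻¹)
      (LFunction χ w) := by
    rw [← hasProd_subtype_iff_mulIndicator, LFunction_eq_LSeries χ hw]
    exact LSeries_eulerProduct_hasProd χ hw
  have hfin : HasProd (fun p : ℕ ↦ if p ∈ q.primeFactors then (1 - (p : ℂ) ^ (-w))⁻¹ else 1)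
      (∏ p ∈ q.primeFactors, (1 - (p : ℂ) ^ (-w))⁻¹) := by
    rw [← prod_congr rfl fun p hp ↦ if_pos hp]
    exact hasProd_prod_of_ne_finset_one fun p hp ↦ if_neg hp
  refine (hL.mul hfin).congr_fun fun p ↦ ?_
  by_cases hp : p.Prime
  · by_cases hpq : p ∣ q
    · have hχp : χ (p : ZMod q) = 0 :=
        χ.map_nonunit ((ZMod.isUnit_prime_iff_not_dvd hp).not.mpr (not_not.mpr hpq))
      simp [hp, hpq, hgp p hp, hχp, NeZero.ne q]
    · simp [hp, hpq, hgp p hp]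
  · simp [hp]

lemma modifiedLFunction_ne_zero (hχ : χ ≠ 1)
    (hRH : ∀ s : ℂ, 0 < s.re → s.re < 1 → LFunction χ s = 0 → s.re = 1 / 2)
    {w : ℂ} (hw : 1 / 2 < w.re) : modifiedLFunction χ w ≠ 0 := by
  refine mul_ne_zero (fun h0 ↦ ?_) (prod_ne_zero_iff.mpr fun p hp ↦
    inv_ne_zero <| one_sub_natCast_cpow_neg_ne_zero (Nat.prime_of_mem_primeFactors hp).one_lt
      (by linarith))
  rcases lt_or_ge w.re 1 with hw1 | hw1
  · linarith [hRH w (by linarith) hw1 h0]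
  · exact LFunction_ne_zero_of_one_le_re χ (.inl hχ) hw1 h0

lemma differentiableOn_modifiedLFunction (hχ : χ ≠ 1) :
    DifferentiableOn ℂ (modifiedLFunction χ) {w | 0 < w.re} := by
  refine (differentiable_LFunction hχ).differentiableOn.mul
    (DifferentiableOn.fun_finsetProd fun p hp ↦ DifferentiableOn.inv ?_ fun w hw ↦
      one_sub_natCast_cpow_neg_ne_zero (Nat.prime_of_mem_primeFactors hp).one_lt hw)
  exact ((differentiable_id.neg.const_cpow (.inl (mod_cast
    (Nat.prime_of_mem_primeFactors hp).ne_zero))).const_sub 1).differentiableOn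

end DirichletCharacter

lemma DifferentiableOn.div_comp_natCast_mul {L : ℂ → ℂ} (hL : DifferentiableOn ℂ L {w | 0 < w.re})
    (hL0 : ∀ w : ℂ, 1 / 2 < w.re → L w ≠ 0) {k : ℕ} (hk : k ≠ 0) :
    DifferentiableOn ℂ (fun s ↦ L s / L (k * s)) {s | 1 / (2 * (k : ℝ)) < s.re} := by
  have hpos : (0 : ℝ) < 1 / (2 * k) := by positivity
  have hre {s : ℂ} (hs : 1 / (2 * (k : ℝ)) < s.re) : 1 / 2 < ((k : ℂ) * s).re := by
    rw [div_lt_iff₀ (by positivity)] at hs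
    simp only [mul_re, natCast_re, natCast_im, zero_mul, sub_zero]
    linarith
  exact (hL.mono fun s hs ↦ hpos.trans hs).div
    (hL.comp (differentiable_id.const_mul _).differentiableOn
      fun s hs ↦ one_half_pos.trans (hre hs))
    fun s hs ↦ hL0 _ (hre hs)

theorem analytic_continuation_odd_general
    (k : ℕ) (hkodd : Odd k)
    (q : ℕ) [NeZero q] (χ : DirichletCharacter ℂ q)
    (hχreal : ∀ n : ZMod q, χ n = -1 ∨ χ n = 0 ∨ χ n = 1) (hχ : χ ≠ 1)
    (hGRH : ∀ s : ℂ, 0 < s.re → s.re < 1 → DirichletCharacter.LFunction χ s = 0 → s.re = 1 / 2)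
    (g : ℕ → ℂ) (hg1 : g 1 = 1)
    (hgmul : ∀ m n : ℕ, g (m * n) = g m * g n)
    (hgp : ∀ p : ℕ, p.Prime → g p = if p ∣ q then 1 else χ (p : ZMod q))
    (f : ℕ → ℂ)
    (hf : ∀ n : ℕ, f n = if ∀ p : ℕ, p.Prime → ¬ p ^ k ∣ n then g n else 0) :
    ∃ G : ℂ → ℂ,
      DifferentiableOn ℂ G {s : ℂ | 1 / (2 * (k : ℝ)) < s.re} ∧
      ∀ s : ℂ, 1 < s.re → G s = ∑' n : ℕ, f n * (n : ℂ) ^ (-s) := by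
  let gHom : ℕ →* ℂ := ⟨⟨g, hg1⟩, hgmul⟩
  have hk : k ≠ 0 := hkodd.pos.ne'
  have hsign (p : ℕ) (hp : p.Prime) : g p = -1 ∨ g p = 0 ∨ g p = 1 := by
    rw [hgp p hp]
    split_ifs <;> simp [hχreal]
  have hg : ∀ n, ‖gHom n‖ ≤ 1 := gHom.norm_le_one_of_prime fun p hp ↦ by
    rcases hsign p hp with h | h | h <;> simp [gHom, h]
  have hgk (p : ℕ) (hp : p.Prime) : gHom p ^ k = gHom p := hkodd.pow_eq_self_of_sign (hsign p hp)
  refine ⟨fun s ↦ χ.modifiedLFunction s / χ.modifiedLFunction (k * s),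
    (χ.differentiableOn_modifiedLFunction hχ).div_comp_natCast_mul
      (fun w hw ↦ χ.modifiedLFunction_ne_zero hχ hGRH hw) hk, fun s hs ↦ ?_⟩
  have hks : 1 < ((k : ℂ) * s).re := by
    simp only [mul_re, natCast_re, natCast_im, zero_mul, sub_zero]
    nlinarith [show (1 : ℝ) ≤ k from mod_cast hkodd.pos]
  rw [show f = kFreeRestrict k gHom from funext hf, tsum_kFreeRestrict_eq_div gHom hk hg hgk hs
    (χ.hasProd_modifiedLFunction g hgp hs) (χ.hasProd_modifiedLFunction g hgp hks)
    (χ.modifiedLFunction_ne_zero hχ hGRH (by linarith))]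

/-- Odd case: under RH for `L(s,χ)`, the Dirichlet series of
`f = μ^(k) g_χ` extends holomorphically to the half-plane `Re(s) > 1/(2k)`. -/
theorem analytic_continuation_odd
    (k : ℕ) (hk : 3 ≤ k) (hkodd : Odd k)
    (q : ℕ) [NeZero q] (χ : DirichletCharacter ℂ q)
    (hχreal : ∀ n : ZMod q, χ n = -1 ∨ χ n = 0 ∨ χ n = 1) (hχ : χ ≠ 1)
    (hGRH : ∀ s : ℂ, 0 < s.re → s.re < 1 → DirichletCharacter.LFunction χ s = 0 → s.re = 1 / 2)
    (g : ℕ → ℂ) (hg1 : g 1 = 1)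
    (hgmul : ∀ m n : ℕ, g (m * n) = g m * g n)
    (hgp : ∀ p : ℕ, p.Prime → g p = if p ∣ q then 1 else χ (p : ZMod q))
    (f : ℕ → ℂ)
    (hf : ∀ n : ℕ, f n = if ∀ p : ℕ, p.Prime → ¬ p ^ k ∣ n then g n else 0) :
    ∃ G : ℂ → ℂ,
      DifferentiableOn ℂ G {s : ℂ | 1 / (2 * (k : ℝ)) < s.re} ∧
      ∀ s : ℂ, 1 < s.re → G s = ∑' n : ℕ, f n * (n : ℂ) ^ (-s) :=
  analytic_continuation_odd_general k hkodd q χ hχreal hχ hGRH g hg1 hgmul hgp f hf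
end
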